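/- In algorithm AlgAU, assume the graph is ℓ-out-protected at time t, with 2 ≤ |ℓ| ≤ k. If a node v is in the faulty turn Faulty(ℓ) at time t, then v experiences a type FA transition before time ϱ^{2(k - |ℓ|) + 1}(t). -/
import Mathlib


set_option autoImplicit false

/-- A turn of AlgAU: able turns `Able(ℓ)` for `1 ≤ |ℓ| ≤ k` and faulty turns
`Faulty(ℓ)` for `2 ≤ |ℓ| ≤ k`. -/
inductive Turn where
  | able (ℓ : ℤ)
  | faulty (ℓ : ℤ)
deriving DecidableEq

/-- The level of a turn. -/
def Turn.level : Turn → ℤ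
  | .able ℓ => ℓ
  | .faulty ℓ => ℓ

/-- Whether a turn is able. -/
def Turn.isAble : Turn → Prop
  | .able _ => True
  | .faulty _ => False

/-- A turn belongs to the state set of AlgAU with parameter `k`. -/
def ValidTurn (k : ℤ) : Turn → Prop
  | .able ℓ => 1 ≤ |ℓ| ∧ |ℓ| ≤ k
  | .faulty ℓ => 2 ≤ |ℓ| ∧ |ℓ| ≤ k

/-- The forward operator: `φ(-1) = 1`, `φ(k) = -k`, `φ(ℓ) = ℓ + 1` otherwise. -/
def forwardOp (k : ℤ) (ℓ : ℤ) : ℤ :=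
  if ℓ = -1 then 1 else if ℓ = k then -k else ℓ + 1

/-- Levels `ℓ, ℓ'` are adjacent: `ℓ' ∈ {ℓ, φ(ℓ), φ⁻¹(ℓ)}`. -/
def adjLvl (k : ℤ) (ℓ ℓ' : ℤ) : Prop :=
  ℓ' = ℓ ∨ ℓ' = forwardOp k ℓ ∨ ℓ = forwardOp k ℓ'

/-- `ψ⁻¹(ℓ)`: the level one unit inwards of `ℓ` (same sign, absolute value decreased). -/
def inwd (ℓ : ℤ) : ℤ := if 0 < ℓ then ℓ - 1 else ℓ + 1

/-- `m` is strictly outwards of `ℓ`: same sign and strictly larger absolute value. -/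
def strictOut (ℓ m : ℤ) : Prop := (0 < ℓ ∧ ℓ < m) ∨ (ℓ < 0 ∧ m < ℓ)

/-- The inclusive neighborhood `N⁺(v)`. -/
def closedNbhd {V : Type} (G : SimpleGraph V) (v : V) : Set V := {u | u = v ∨ G.Adj u v}

/-- Node `v` is protected under configuration `c`: all incident edges have adjacent
endpoint levels. -/
def NodeProt {V : Type} (k : ℤ) (G : SimpleGraph V) (c : V → Turn) (v : V) : Prop :=
  ∀ u, G.Adj u v → adjLvl k ((c v).level) ((c u).level)

/-- Node `v` is good: protected and sensing no faulty turn. -/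
def NodeGood {V : Type} (k : ℤ) (G : SimpleGraph V) (c : V → Turn) (v : V) : Prop :=
  NodeProt k G c v ∧ ∀ u ∈ closedNbhd G v, (c u).isAble

/-- Condition for a type AA transition of `v` from `Able(ℓ)` to `Able(φ(ℓ))`:
`v` is good and all sensed levels belong to `{ℓ, φ(ℓ)}`. -/
def AAcond {V : Type} (k : ℤ) (G : SimpleGraph V) (c : V → Turn) (v : V) (ℓ : ℤ) : Prop :=
  c v = .able ℓ ∧ NodeGood k G c v ∧
    ∀ u ∈ closedNbhd G v, (c u).level = ℓ ∨ (c u).level = forwardOp k ℓ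

/-- Condition for a type AF transition of `v` from `Able(ℓ)` to `Faulty(ℓ)`
(`2 ≤ |ℓ|`): `v` is not protected or senses the turn `Faulty(ψ⁻¹(ℓ))`. -/
def AFcond {V : Type} (k : ℤ) (G : SimpleGraph V) (c : V → Turn) (v : V) (ℓ : ℤ) : Prop :=
  c v = .able ℓ ∧ 2 ≤ |ℓ| ∧
    (¬ NodeProt k G c v ∨ ∃ u ∈ closedNbhd G v, c u = .faulty (inwd ℓ))

/-- Condition for a type FA transition of `v` from `Faulty(ℓ)` to `Able(ψ⁻¹(ℓ))`:
`v` senses no level strictly outwards of `ℓ`. -/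
def FAcond {V : Type} (G : SimpleGraph V) (c : V → Turn) (v : V) (ℓ : ℤ) : Prop :=
  c v = .faulty ℓ ∧ ∀ u ∈ closedNbhd G v, ¬ strictOut ℓ ((c u).level)

/-- The new turn `q` of an activated node `v` in one step of AlgAU. -/
def StepNode {V : Type} (k : ℤ) (G : SimpleGraph V) (c : V → Turn) (v : V) (q : Turn) : Prop :=
  (∀ ℓ, AAcond k G c v ℓ → q = .able (forwardOp k ℓ)) ∧
  (∀ ℓ, AFcond k G c v ℓ → ¬ AAcond k G c v ℓ → q = .faulty ℓ) ∧
  (∀ ℓ, FAcond G c v ℓ → q = .able (inwd ℓ)) ∧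
  ((∀ ℓ, ¬ AAcond k G c v ℓ ∧ ¬ AFcond k G c v ℓ ∧ ¬ FAcond G c v ℓ) → q = c v)

/-- One asynchronous step of AlgAU with activation set `A`: activated nodes follow
the transition rules, the others keep their turns. -/
def Step {V : Type} (k : ℤ) (G : SimpleGraph V) (A : Set V) (c c' : V → Turn) : Prop :=
  ∀ v, (v ∉ A → c' v = c v) ∧ (v ∈ A → StepNode k G c v (c' v))

/-- The level `m` belongs to `Ψ^{≥}(ℓ)`: same sign as `ℓ` and `|m| ≥ |ℓ|`. -/
def inPsiGe (ℓ m : ℤ) : Prop := (0 < ℓ ∧ ℓ ≤ m) ∨ (ℓ < 0 ∧ m ≤ ℓ)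

/-- Node `v` is out-protected: it senses no level strictly more than one unit
outwards of its own level. -/
def OutProtNode {V : Type} (G : SimpleGraph V) (c : V → Turn) (v : V) : Prop :=
  ∀ u ∈ closedNbhd G v,
    ¬ ((0 < (c v).level ∧ (c v).level + 2 ≤ (c u).level) ∨
       ((c v).level < 0 ∧ (c u).level ≤ (c v).level - 2))


section Helpers

variable {V : Type} {G : SimpleGraph V} {k : ℤ} {σ : ℕ → V → Turn} {A : ℕ → Set V}

lemma level_bounds {q : Turn} (h : ValidTurn k q) : 1 ≤ |q.level| ∧ |q.level| ≤ k := by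
  cases q with
  | able m => exact ⟨h.1, h.2⟩
  | faulty m =>
    refine ⟨?_, h.2⟩
    have h1 : 2 ≤ |m| := h.1
    show 1 ≤ |m|
    omega

lemma self_mem_closedNbhd (v : V) : v ∈ closedNbhd G v := Or.inl rfl

lemma adj_mem_closedNbhd {u v : V} (h : G.Adj u v) : u ∈ closedNbhd G v := Or.inr h

lemma node_step (hstep : ∀ t, Step k G (A t) (σ t) (σ (t+1))) (j : ℕ) (x : V) :
    σ (j+1) x = σ j x ∨ StepNode k G (σ j) x (σ (j+1) x) := by
  rcases Classical.em (x ∈ A j) with h | h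
  · exact Or.inr ((hstep j x).2 h)
  · exact Or.inl ((hstep j x).1 h)

lemma faulty_step (hstep : ∀ t, Step k G (A t) (σ t) (σ (t+1))) {j : ℕ} {x : V} {m : ℤ}
    (h : σ j x = .faulty m) :
    σ (j+1) x = .faulty m ∨ (FAcond G (σ j) x m ∧ σ (j+1) x = .able (inwd m)) := by
  rcases node_step hstep j x with he | ⟨hAA, hAF, hFA, hN⟩
  · left; rw [he, h]
  · by_cases hF : FAcond G (σ j) x m
    · exact Or.inr ⟨hF, hFA m hF⟩
    · left
      rw [hN ?_, h]
      intro ℓ'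
      refine ⟨fun hc => ?_, fun hc => ?_, fun hc => ?_⟩
      · have h1 := hc.1; rw [h] at h1; exact Turn.noConfusion h1
      · have h1 := hc.1; rw [h] at h1; exact Turn.noConfusion h1
      · have h1 := hc.1; rw [h] at h1
        injection h1 with h1; subst h1
        exact hF hc

lemma able_step (hstep : ∀ t, Step k G (A t) (σ t) (σ (t+1))) {j : ℕ} {x : V} {m : ℤ}
    (h : σ j x = .able m) :
    σ (j+1) x = .able m ∨
    (AAcond k G (σ j) x m ∧ σ (j+1) x = .able (forwardOp k m)) ∨
    (AFcond k G (σ j) x m ∧ σ (j+1) x = .faulty m) := by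
  rcases node_step hstep j x with he | ⟨hAA, hAF, hFA, hN⟩
  · left; rw [he, h]
  · by_cases hA : AAcond k G (σ j) x m
    · exact Or.inr (Or.inl ⟨hA, hAA m hA⟩)
    · by_cases hF : AFcond k G (σ j) x m
      · exact Or.inr (Or.inr ⟨hF, hAF m hF hA⟩)
      · left
        rw [hN ?_, h]
        intro ℓ'
        refine ⟨fun hc => ?_, fun hc => ?_, fun hc => ?_⟩
        · have h1 := hc.1; rw [h] at h1
          injection h1 with h1; subst h1; exact hA hc
        · have h1 := hc.1; rw [h] at h1
          injection h1 with h1; subst h1; exact hF hc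
        · have h1 := hc.1; rw [h] at h1; exact Turn.noConfusion h1

lemma stay_faulty (hstep : ∀ t, Step k G (A t) (σ t) (σ (t+1))) {t₀ : ℕ} {x : V} {m : ℤ}
    (h0 : σ t₀ x = .faulty m) (t₂ : ℕ) (hle : t₀ ≤ t₂) :
    (∀ s, t₀ ≤ s → s ≤ t₂ → σ s x = .faulty m) ∨
    ∃ s, t₀ ≤ s ∧ s < t₂ ∧ σ s x = .faulty m ∧ σ (s+1) x = .able (inwd m) := by
  induction t₂, hle using Nat.le_induction with
  | base =>
    left; intro s h1 h2
    have : s = t₀ := le_antisymm h2 h1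
    rw [this, h0]
  | succ n hn ih =>
    rcases ih with hall | ⟨s, hs1, hs2, hs3, hs4⟩
    · have hfn : σ n x = .faulty m := hall n hn le_rfl
      rcases faulty_step hstep hfn with he | ⟨_, he⟩
      · left; intro s h1 h2
        by_cases h3 : s ≤ n
        · exact hall s h1 h3
        · have h4 : s = n + 1 := by omega
          rw [h4, he]
      · exact Or.inr ⟨n, hn, Nat.lt_succ_self n, hfn, he⟩
    · exact Or.inr ⟨s, hs1, Nat.lt_succ_of_lt hs2, hs3, hs4⟩

end Helpers

section Helpers2

variable {V : Type} {G : SimpleGraph V} {k : ℤ} {σ : ℕ → V → Turn} {A : ℕ → Set V}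

lemma level_able' (m : ℤ) : (Turn.able m).level = m := rfl
lemma level_faulty' (m : ℤ) : (Turn.faulty m).level = m := rfl

lemma forwardOp_cases (k m : ℤ) :
    (m = -1 ∧ forwardOp k m = 1) ∨ (m ≠ -1 ∧ m = k ∧ forwardOp k m = -k) ∨
    (m ≠ -1 ∧ m ≠ k ∧ forwardOp k m = m + 1) := by
  unfold forwardOp; split_ifs <;> simp_all

lemma inwd_cases (m : ℤ) : (0 < m ∧ inwd m = m - 1) ∨ (m ≤ 0 ∧ inwd m = m + 1) := by
  unfold inwd; split_ifs <;> omega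

lemma level_step (hstep : ∀ t, Step k G (A t) (σ t) (σ (t+1))) (j : ℕ) (x : V) :
    (σ (j+1) x).level = (σ j x).level ∨
    (∃ m, σ j x = .able m ∧ AAcond k G (σ j) x m ∧ σ (j+1) x = .able (forwardOp k m)) ∨
    (∃ m, σ j x = .faulty m ∧ FAcond G (σ j) x m ∧ σ (j+1) x = .able (inwd m)) := by
  cases hc : σ j x with
  | able m =>
    rcases able_step hstep hc with he | ⟨hA, he⟩ | ⟨hF, he⟩
    · left; simp [he, hc]
    · exact Or.inr (Or.inl ⟨m, rfl, hA, he⟩)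
    · left; simp [he, hc, level_able', level_faulty']
  | faulty m =>
    rcases faulty_step hstep hc with he | ⟨hF, he⟩
    · left; simp [he, hc]
    · exact Or.inr (Or.inr ⟨m, rfl, hF, he⟩)

lemma outprot_step (hk2 : 2 ≤ k)
    (hvalid : ∀ t v, ValidTurn k (σ t v))
    (hstep : ∀ t, Step k G (A t) (σ t) (σ (t+1)))
    {ℓ₀ : ℤ} (hℓ₀ : 2 ≤ |ℓ₀|) {j : ℕ}
    (hout : ∀ w, inPsiGe ℓ₀ ((σ j w).level) → OutProtNode G (σ j) w) :
    ∀ w, inPsiGe ℓ₀ ((σ (j+1) w).level) → OutProtNode G (σ (j+1)) w := by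
  intro w hw u hu hbad
  rcases hu with rfl | hadj
  · omega
  have hadj' : G.Adj w u := hadj.symm
  have B1 := level_bounds (hvalid j w)
  have B2 := level_bounds (hvalid j u)
  have B4 := level_bounds (hvalid (j+1) u)
  have C1 := abs_cases ((σ j w).level)
  have C2 := abs_cases ((σ j u).level)
  have C4 := abs_cases ((σ (j+1) u).level)
  have C5 := abs_cases ℓ₀
  simp only [inPsiGe] at hw
  rcases level_step hstep j w with hW | ⟨m, hcw, hAW, heW⟩ | ⟨m, hcw, hFW, heW⟩
  · -- w's level unchanged
    have hw' : (0 < ℓ₀ ∧ ℓ₀ ≤ (σ j w).level) ∨ (ℓ₀ < 0 ∧ (σ j w).level ≤ ℓ₀) := by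
      rw [hW] at hw; exact hw
    have Pw := hout w hw' u (Or.inr hadj)
    rcases level_step hstep j u with hU | ⟨mu, hcu, hAU, heU⟩ | ⟨mu, hcu, hFU, heU⟩
    · omega
    · -- u did AA
      have hu0 : (σ j u).level = mu := by rw [hcu]; rfl
      have hu1 : (σ (j+1) u).level = forwardOp k mu := by rw [heU]; rfl
      have hsens := hAU.2.2 w (Or.inr hadj')
      have hfc := forwardOp_cases k mu
      omega
    · -- u did FA
      have hu0 : (σ j u).level = mu := by rw [hcu]; rfl
      have hu1 : (σ (j+1) u).level = inwd mu := by rw [heU]; rfl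
      have hic := inwd_cases mu
      omega
  · -- w did AA
    have hv0 : (σ j w).level = m := by rw [hcw]; rfl
    have hv1 : (σ (j+1) w).level = forwardOp k m := by rw [heW]; rfl
    have hsens := hAW.2.2 u (Or.inr hadj)
    have hfcw := forwardOp_cases k m
    rcases level_step hstep j u with hU | ⟨mu, hcu, hAU, heU⟩ | ⟨mu, hcu, hFU, heU⟩
    · omega
    · have hu0 : (σ j u).level = mu := by rw [hcu]; rfl
      have hu1 : (σ (j+1) u).level = forwardOp k mu := by rw [heU]; rfl
      have hfcu := forwardOp_cases k mu
      omega
    · -- u faulty, but w's AAcond says all neighbors able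
      have := hAW.2.1.2 u (Or.inr hadj)
      rw [hcu] at this
      simp [Turn.isAble] at this
  · -- w did FA
    have hv0 : (σ j w).level = m := by rw [hcw]; rfl
    have hv1 : (σ (j+1) w).level = inwd m := by rw [heW]; rfl
    have hm2 : 2 ≤ |m| := by have := hvalid j w; rw [hcw] at this; exact this.1
    have Cm := abs_cases m
    have hicw := inwd_cases m
    have hns := hFW.2 u (Or.inr hadj)
    simp only [strictOut, level_able', level_faulty'] at hns
    rcases level_step hstep j u with hU | ⟨mu, hcu, hAU, heU⟩ | ⟨mu, hcu, hFU, heU⟩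
    · omega
    · have := hAU.2.1.2 w (Or.inr hadj')
      rw [hcw] at this
      simp [Turn.isAble] at this
    · have hu0 : (σ j u).level = mu := by rw [hcu]; rfl
      have hu1 : (σ (j+1) u).level = inwd mu := by rw [heU]; rfl
      have hicu := inwd_cases mu
      omega

end Helpers2

section Helpers3

variable {V : Type} {G : SimpleGraph V} {k : ℤ} {σ : ℕ → V → Turn} {A : ℕ → Set V}

lemma strictOut_inwd {ℓ m : ℤ} (hℓ : 2 ≤ |ℓ|) (h : ¬ strictOut ℓ m) :
    ¬ strictOut ℓ (inwd m) := by
  have := abs_cases ℓ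
  have := inwd_cases m
  simp only [strictOut] at *
  omega

lemma not_strictOut_self (ℓ : ℤ) : ¬ strictOut ℓ ℓ := by
  simp only [strictOut]; omega

lemma clean_persist (hstep : ∀ t, Step k G (A t) (σ t) (σ (t+1))) {j : ℕ} {x v : V} {ℓ : ℤ}
    (hℓ : 2 ≤ |ℓ|) (hx : x ∈ closedNbhd G v) (hv : σ j v = .faulty ℓ)
    (h : ¬ strictOut ℓ ((σ j x).level)) : ¬ strictOut ℓ ((σ (j+1) x).level) := by
  rcases hx with rfl | hadj
  · rcases faulty_step hstep hv with he | ⟨_, he⟩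
    · rw [he]; rwa [hv] at h
    · rw [he]
      show ¬ strictOut ℓ (inwd ℓ)
      exact strictOut_inwd hℓ (not_strictOut_self ℓ)
  · cases hc : σ j x with
    | able m =>
      rcases able_step hstep hc with he | ⟨hA, he⟩ | ⟨hF, he⟩
      · rw [he]; rwa [hc] at h
      · exfalso
        have := hA.2.1.2 v (Or.inr hadj.symm)
        rw [hv] at this
        simp [Turn.isAble] at this
      · rw [he]; rw [hc] at h; exact h
    | faulty m =>
      rcases faulty_step hstep hc with he | ⟨_, he⟩
      · rw [he]; rwa [hc] at h
      · rw [he]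
        rw [hc] at h
        exact strictOut_inwd hℓ h

lemma forced_AF (hstep : ∀ t, Step k G (A t) (σ t) (σ (t+1))) {j : ℕ} {x v : V} {ℓ p : ℤ}
    (hadj : G.Adj x v) (hv : σ j v = .faulty ℓ) (hx : σ j x = .able p)
    (hp2 : 2 ≤ |p|) (hip : inwd p = ℓ) (hA : x ∈ A j) :
    σ (j+1) x = .faulty p := by
  have hs := (hstep j x).2 hA
  refine hs.2.1 p ⟨hx, hp2, Or.inr ⟨v, Or.inr hadj.symm, by rw [hv, hip]⟩⟩ ?_
  intro hc
  have := hc.2.1.2 v (Or.inr hadj.symm)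
  rw [hv] at this
  simp [Turn.isAble] at this

lemma outprot_iter (hk2 : 2 ≤ k)
    (hvalid : ∀ t v, ValidTurn k (σ t v))
    (hstep : ∀ t, Step k G (A t) (σ t) (σ (t+1)))
    {ℓ₀ : ℤ} (hℓ₀ : 2 ≤ |ℓ₀|) {t : ℕ}
    (hout : ∀ w, inPsiGe ℓ₀ ((σ t w).level) → OutProtNode G (σ t) w) :
    ∀ j, t ≤ j → ∀ w, inPsiGe ℓ₀ ((σ j w).level) → OutProtNode G (σ j) w := by
  intro j hj
  induction j, hj using Nat.le_induction with
  | base => exact hout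
  | succ n hn ih => exact outprot_step hk2 hvalid hstep hℓ₀ ih

lemma le_iterate {ϱ : ℕ → ℕ} (h : ∀ s, s ≤ ϱ s) (n t : ℕ) : t ≤ ϱ^[n] t := by
  induction n with
  | zero => simp
  | succ n ih =>
    rw [Function.iterate_succ_apply']
    exact le_trans ih (h _)

end Helpers3

section MainAux

variable {V : Type} {G : SimpleGraph V} {k : ℤ} {σ : ℕ → V → Turn} {A : ℕ → Set V} {ϱ : ℕ → ℕ}

lemma main_aux (hk2 : 2 ≤ k)
    (hvalid : ∀ t v, ValidTurn k (σ t v))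
    (hstep : ∀ t, Step k G (A t) (σ t) (σ (t + 1)))
    (hϱ : ∀ s : ℕ, s ≤ ϱ s ∧ ∀ v : V, ∃ s', s ≤ s' ∧ s' < ϱ s ∧ v ∈ A s') :
    ∀ n : ℕ, ∀ t : ℕ, ∀ ℓ : ℤ, ∀ v : V, 2 ≤ |ℓ| → |ℓ| ≤ k → (k - |ℓ|).toNat = n →
    (∀ w, inPsiGe ℓ ((σ t w).level) → OutProtNode G (σ t) w) →
    σ t v = .faulty ℓ →
    ∃ s, t ≤ s ∧ s < ϱ^[2*n+1] t ∧ σ s v = .faulty ℓ ∧ σ (s+1) v = .able (inwd ℓ) := by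
  have hub : ∀ s, s ≤ ϱ s := fun s => (hϱ s).1
  intro n
  induction n with
  | zero =>
    intro t ℓ v hℓ2 hℓk hn hout hv
    have hkℓ : k ≤ |ℓ| := by omega
    have hT1 : ϱ^[2*0+1] t = ϱ t := by simp
    rw [hT1]
    rcases stay_faulty hstep hv (ϱ t) (hub t) with hall | ⟨s, h1, h2, h3, h4⟩
    · obtain ⟨s₀, hs₀1, hs₀2, hs₀3⟩ := (hϱ t).2 v
      have hfv : σ s₀ v = .faulty ℓ := hall s₀ hs₀1 (le_of_lt hs₀2)
      have hFA : FAcond G (σ s₀) v ℓ := by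
        refine ⟨hfv, ?_⟩
        intro u _
        have hb := level_bounds (hvalid s₀ u)
        have := abs_cases ((σ s₀ u).level)
        have := abs_cases ℓ
        simp only [strictOut]
        omega
      exact ⟨s₀, hs₀1, hs₀2, hfv, ((hstep s₀ v).2 hs₀3).2.2.1 ℓ hFA⟩
    · exact ⟨s, h1, h2, h3, h4⟩
  | succ n ih =>
    intro t ℓ v hℓ2 hℓk hn hout hv
    have hCl := abs_cases ℓ
    set p := if 0 < ℓ then ℓ + 1 else ℓ - 1 with hp
    have hpfacts : (0 < ℓ ∧ p = ℓ + 1) ∨ (ℓ < 0 ∧ p = ℓ - 1) := by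
      rw [hp]; split_ifs with h
      · exact Or.inl ⟨h, rfl⟩
      · exact Or.inr ⟨by omega, rfl⟩
    have hCp := abs_cases p
    have hp2 : 2 ≤ |p| := by omega
    have hpk : |p| ≤ k := by omega
    have hpn : (k - |p|).toNat = n := by omega
    have hip : inwd p = ℓ := by
      have := inwd_cases p
      omega
    have htr : t ≤ ϱ t := hub t
    have hrT' : ϱ t ≤ ϱ^[2*n+1] (ϱ t) := le_iterate hub _ _
    have hT'T : ϱ^[2*n+1] (ϱ t) ≤ ϱ (ϱ^[2*n+1] (ϱ t)) := hub _
    have hTeq : ϱ^[2*(n+1)+1] t = ϱ (ϱ^[2*n+1] (ϱ t)) := by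
      have e1 : 2*(n+1)+1 = ((2*n+1) + 1) + 1 := by ring
      rw [e1, Function.iterate_succ_apply', Function.iterate_succ_apply]
    rw [hTeq]
    rcases stay_faulty hstep hv (ϱ (ϱ^[2*n+1] (ϱ t))) (by omega) with hall | ⟨s, h1, h2, h3, h4⟩
    · -- v faulty ℓ throughout [t, T]
      have houtj := outprot_iter hk2 hvalid hstep hℓ2 hout
      have persist : ∀ u ∈ closedNbhd G v, ∀ j, t ≤ j → ¬ strictOut ℓ ((σ j u).level) →
          ∀ s, j ≤ s → s ≤ ϱ (ϱ^[2*n+1] (ϱ t)) → ¬ strictOut ℓ ((σ s u).level) := by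
        intro u hu j hj hclean s hjs
        induction s, hjs using Nat.le_induction with
        | base => exact fun _ => hclean
        | succ i hi ihs =>
          intro hsT
          exact clean_persist hstep hℓ2 hu (hall i (by omega) (by omega)) (ihs (by omega))
      have clean_at : ∀ u ∈ closedNbhd G v, ∀ s, ϱ^[2*n+1] (ϱ t) ≤ s →
          s ≤ ϱ (ϱ^[2*n+1] (ϱ t)) → ¬ strictOut ℓ ((σ s u).level) := by
        intro u hu
        suffices hj : ∃ j, t ≤ j ∧ j ≤ ϱ^[2*n+1] (ϱ t) ∧ ¬ strictOut ℓ ((σ j u).level) by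
          obtain ⟨j, hj1, hj2, hj3⟩ := hj
          intro s hs1 hs2
          exact persist u hu j hj1 hj3 s (by omega) hs2
        rcases hu with rfl | hadj
        · refine ⟨t, le_rfl, by omega, ?_⟩
          rw [hv]
          exact not_strictOut_self ℓ
        · by_cases hcl : strictOut ℓ ((σ t u).level)
          swap
          · exact ⟨t, le_rfl, by omega, hcl⟩
          · have hinl : inPsiGe ℓ ((σ t v).level) := by
              rw [hv]
              simp only [inPsiGe, level_faulty']
              omega
            have hP := hout v hinl u (Or.inr hadj)
            rw [hv] at hP
            simp only [level_faulty'] at hP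
            have hlevp : (σ t u).level = p := by
              simp only [strictOut] at hcl
              omega
            have hRstep : ∀ j, t ≤ j → j < ϱ (ϱ^[2*n+1] (ϱ t)) →
                (¬ strictOut ℓ ((σ j u).level) ∨ σ j u = .faulty p) →
                (¬ strictOut ℓ ((σ (j+1) u).level) ∨ σ (j+1) u = .faulty p) := by
              intro j hj1 hj2 hR
              rcases hR with hcln | hfp
              · exact Or.inl (clean_persist hstep hℓ2 (Or.inr hadj)
                  (hall j hj1 (by omega)) hcln)
              · rcases faulty_step hstep hfp with he | ⟨_, he⟩
                · exact Or.inr he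
                · left
                  rw [he, hip]
                  exact not_strictOut_self ℓ
            have hRr : ¬ strictOut ℓ ((σ (ϱ t) u).level) ∨ σ (ϱ t) u = .faulty p := by
              cases hct : σ t u with
              | faulty m =>
                have hm : m = p := by
                  have hlm : (σ t u).level = m := by rw [hct]; rfl
                  omega
                subst hm
                have key : ∀ j, t ≤ j → j ≤ ϱ t →
                    (¬ strictOut ℓ ((σ j u).level) ∨ σ j u = .faulty p) := by
                  intro j hj1
                  induction j, hj1 using Nat.le_induction with
                  | base => exact fun _ => Or.inr hct
                  | succ i hi ihs =>
                    intro hir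
                    exact hRstep i hi (by omega) (ihs (by omega))
                exact key (ϱ t) htr le_rfl
              | able m =>
                have hm : m = p := by
                  have hlm : (σ t u).level = m := by rw [hct]; rfl
                  omega
                subst hm
                obtain ⟨s₀, ha1, ha2, ha3⟩ := (hϱ t).2 u
                have inv : ∀ j, t ≤ j → j ≤ ϱ t →
                    ((¬ strictOut ℓ ((σ j u).level) ∨ σ j u = .faulty p) ∨
                     (σ j u = .able p ∧ ∀ i, t ≤ i → i < j → u ∉ A i)) := by
                  intro j hj1
                  induction j, hj1 using Nat.le_induction with
                  | base =>
                    exact fun _ => Or.inr ⟨hct, fun i h1 h2 => absurd (lt_of_lt_of_le h2 h1)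
                      (Nat.lt_irrefl i)⟩
                  | succ i hi ihs =>
                    intro hir
                    rcases ihs (by omega) with hR | ⟨hab, hnoact⟩
                    · exact Or.inl (hRstep i hi (by omega) hR)
                    · by_cases hAi : u ∈ A i
                      · exact Or.inl (Or.inr
                          (forced_AF hstep hadj (hall i hi (by omega)) hab hp2 hip hAi))
                      · refine Or.inr ⟨?_, ?_⟩
                        · rw [(hstep i u).1 hAi, hab]
                        · intro i' hi1 hi2
                          by_cases h3 : i' < i
                          · exact hnoact i' hi1 h3
                          · have : i' = i := by omega
                            rw [this]
                            exact hAi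
                rcases inv (ϱ t) htr le_rfl with hR | ⟨_, hnoact⟩
                · exact hR
                · exact absurd ha3 (hnoact s₀ ha1 ha2)
            rcases hRr with hcln | hfp
            · exact ⟨ϱ t, htr, hrT', hcln⟩
            · have houtp : ∀ w, inPsiGe p ((σ (ϱ t) w).level) → OutProtNode G (σ (ϱ t)) w := by
                intro w hw
                refine houtj (ϱ t) htr w ?_
                simp only [inPsiGe] at hw ⊢
                omega
              obtain ⟨s', hs1, hs2, hs3, hs4⟩ := ih (ϱ t) p u hp2 hpk hpn houtp hfp
              refine ⟨s' + 1, by omega, by omega, ?_⟩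
              rw [hs4, hip]
              exact not_strictOut_self ℓ
      obtain ⟨s₀, hs1, hs2, hs3⟩ := (hϱ (ϱ^[2*n+1] (ϱ t))).2 v
      have hfv : σ s₀ v = .faulty ℓ := hall s₀ (by omega) (by omega)
      have hFA : FAcond G (σ s₀) v ℓ :=
        ⟨hfv, fun u hu => clean_at u hu s₀ hs1 (le_of_lt hs2)⟩
      exact ⟨s₀, by omega, hs2, hfv, ((hstep s₀ v).2 hs3).2.2.1 ℓ hFA⟩
    · exact ⟨s, h1, h2, h3, h4⟩

end MainAux

/-- in AlgAU, if the graph is `ℓ`-out-protected at time `t`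
(`2 ≤ |ℓ| ≤ k`) and a node `v` is in turn `Faulty(ℓ)` at time `t`, then `v`
experiences a type FA transition before time `ϱ^{2(k - |ℓ|) + 1}(t)`. -/
theorem stmt_9 {V : Type} [Fintype V] (G : SimpleGraph V) (D : ℕ) (k : ℤ)
    (hk : k = 3 * D + 2)
    (σ : ℕ → V → Turn) (A : ℕ → Set V)
    (hvalid : ∀ t v, ValidTurn k (σ t v))
    (hstep : ∀ t, Step k G (A t) (σ t) (σ (t + 1)))
    (ϱ : ℕ → ℕ)
    (hϱ : ∀ s : ℕ, s ≤ ϱ s ∧ ∀ v : V, ∃ s', s ≤ s' ∧ s' < ϱ s ∧ v ∈ A s')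
    (t : ℕ) (ℓ : ℤ) (hℓ2 : 2 ≤ |ℓ|) (hℓk : |ℓ| ≤ k)
    (hout : ∀ v : V, inPsiGe ℓ ((σ t v).level) → OutProtNode G (σ t) v)
    (v : V) (hv : σ t v = .faulty ℓ) :
    ∃ s : ℕ, t ≤ s ∧ s < ϱ^[2 * (k - |ℓ|).toNat + 1] t ∧
      ∃ m, σ s v = .faulty m ∧ σ (s + 1) v = .able (inwd m) := by
  have hk2 : 2 ≤ k := by omega
  obtain ⟨s, h1, h2, h3, h4⟩ :=
    main_aux hk2 hvalid hstep hϱ ((k - |ℓ|).toNat) t ℓ v hℓ2 hℓk rfl hout hv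
  exact ⟨s, h1, h2, ℓ, h3, h4⟩
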